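/- For a tree topology, the function u ↦ −log det(G diag(u^+) G^T) + trace(Ξ diag(u) Ξ^T K), defined on positive weight vectors u ∈ ℝ^{n−1}, attains its unique stationary point at u_j = 1/(ξ_j^T K ξ_j), provided ξ_j^T K ξ_j > 0 for all j. -/

import Mathlib

/-!
Since `det (G diag(u⁺) Gᵀ) = (det G)² · (∏ⱼ uⱼ) / n` and `tr (Ξ diag(u) Ξᵀ K) = ∑ⱼ uⱼ cⱼ` with
`cⱼ = ξⱼᵀ K ξⱼ`, on the positive orthant the objective separates as
`const + ∑ⱼ (cⱼ uⱼ - log uⱼ)`, whose `j`-th partial derivative is `cⱼ - 1/uⱼ`.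
-/

open Matrix Filter Topology

namespace Matrix

variable {m k R : Type*} [Fintype m] [Fintype k] [DecidableEq k] [CommRing R]

theorem trace_mul_diagonal_mul_transpose_mul (A : Matrix m k R) (d : k → R) (K : Matrix m m R) :
    trace (A * diagonal d * Aᵀ * K) = ∑ j, d j * (Aᵀ j ⬝ᵥ (K *ᵥ Aᵀ j)) := by
  have hcycle : trace (A * diagonal d * Aᵀ * K) = trace (diagonal d * (Aᵀ * K * A)) := by
    rw [Matrix.mul_assoc, Matrix.mul_assoc, trace_mul_comm, Matrix.mul_assoc, Matrix.mul_assoc]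
  rw [hcycle]
  simp only [trace, diag, diagonal_mul]
  refine Finset.sum_congr rfl fun j _ => ?_
  congr 1
  simp only [mul_apply, dotProduct, mulVec, Finset.sum_mul, Finset.mul_sum, transpose_apply]
  rw [Finset.sum_comm]
  exact Finset.sum_congr rfl fun a _ => Finset.sum_congr rfl fun b _ => by ring

theorem det_mul_diagonal_mul_transpose [DecidableEq m] (G : Matrix m m R) (w : m → R) :
    det (G * diagonal w * Gᵀ) = det G ^ 2 * ∏ i, w i := by
  rw [det_mul, det_mul, det_transpose, det_diagonal]
  ring

end Matrix

theorem ContinuousLinearMap.sum_smul_proj_eq_zero_iff {ι : Type*} [Fintype ι] [DecidableEq ι]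
    (a : ι → ℝ) : (∑ j, a j • ContinuousLinearMap.proj j : (ι → ℝ) →L[ℝ] ℝ) = 0 ↔ a = 0 := by
  refine ⟨fun h => funext fun k => ?_, fun h => by simp [h]⟩
  simpa [Pi.single_apply] using congrArg (fun T : (ι → ℝ) →L[ℝ] ℝ => T (Pi.single k 1)) h

section SumMulSubLog

variable {ι : Type*} [Fintype ι]

theorem hasFDerivAt_sum_mul_sub_log (c u : ι → ℝ) (hu : ∀ j, u j ≠ 0) :
    HasFDerivAt (fun v : ι → ℝ => ∑ j, (c j * v j - Real.log (v j)))
      (∑ j, (c j - (u j)⁻¹) • ContinuousLinearMap.proj (R := ℝ) (φ := fun _ : ι => ℝ) j) u := by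
  refine HasFDerivAt.fun_sum fun j _ => ?_
  have hderiv : HasDerivAt (fun x => c j * x - Real.log x) (c j - (u j)⁻¹) (u j) := by
    simpa using ((hasDerivAt_id (u j)).const_mul (c j)).fun_sub (Real.hasDerivAt_log (hu j))
  exact hderiv.comp_hasFDerivAt (f := fun v : ι → ℝ => v j) u (hasFDerivAt_apply j u)

theorem fderiv_sum_mul_sub_log_eq_zero_iff [DecidableEq ι] (c u : ι → ℝ) (hu : ∀ j, u j ≠ 0) :
    fderiv ℝ (fun v : ι → ℝ => ∑ j, (c j * v j - Real.log (v j))) u = 0 ↔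
      u = fun j => (c j)⁻¹ := by
  rw [(hasFDerivAt_sum_mul_sub_log c u hu).fderiv,
    ContinuousLinearMap.sum_smul_proj_eq_zero_iff]
  simp only [funext_iff, Pi.zero_apply, sub_eq_zero, eq_comm (a := c _), inv_eq_iff_eq_inv]

end SumMulSubLog

theorem tree_objective_unique_stationary_point_general (n : ℕ) (hn : 0 < n)
    (ξ : Fin (n - 1) → Fin n → ℝ)
    (Ξ : Matrix (Fin n) (Fin (n - 1)) ℝ) (hΞ : ∀ i j, Ξ i j = ξ j i)
    (G : Matrix (Fin n) (Fin n) ℝ)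
    (hGinv : IsUnit G.det)
    (K : Matrix (Fin n) (Fin n) ℝ)
    (uplus : (Fin (n - 1) → ℝ) → Fin n → ℝ)
    (huplus : ∀ u j, uplus u j = if h : (j : ℕ) < n - 1 then u ⟨j, h⟩ else (n : ℝ)⁻¹)
    (J : (Fin (n - 1) → ℝ) → ℝ)
    (hJ : ∀ u, J u = -Real.log (G * Matrix.diagonal (uplus u) * Gᵀ).det
        + Matrix.trace (Ξ * Matrix.diagonal u * Ξᵀ * K)) :
    ∀ u : Fin (n - 1) → ℝ, (∀ j, 0 < u j) →
      (fderiv ℝ J u = 0 ↔ u = fun j => (ξ j ⬝ᵥ (K *ᵥ ξ j))⁻¹) := by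
  obtain ⟨m, rfl⟩ : ∃ m, n = m + 1 := ⟨n - 1, by omega⟩
  intro u hu
  have hcol (j) : Ξᵀ j = ξ j := funext fun i => hΞ i j
  have hprod (v : Fin (m + 1 - 1) → ℝ) : ∏ i, uplus v i = (m + 1 : ℝ)⁻¹ * ∏ j, v j := by
    simp [Fin.prod_univ_castSucc, huplus, mul_comm]
  have hscale : G.det ^ 2 * (m + 1 : ℝ)⁻¹ ≠ 0 := by
    have := hGinv.ne_zero
    positivity
  have hJ_near : J =ᶠ[𝓝 u] fun v => -Real.log (G.det ^ 2 * (m + 1 : ℝ)⁻¹) +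
      ∑ j, ((ξ j ⬝ᵥ (K *ᵥ ξ j)) * v j - Real.log (v j)) := by
    filter_upwards [eventually_all.2 fun j => (continuous_apply j).continuousAt.eventually
      (lt_mem_nhds (hu j))] with v hv
    have hprod_ne : ∏ j, v j ≠ 0 := Finset.prod_ne_zero_iff.2 fun j _ => (hv j).ne'
    rw [hJ, det_mul_diagonal_mul_transpose, hprod, ← mul_assoc, Real.log_mul hscale hprod_ne,
      Real.log_prod fun j _ => (hv j).ne', trace_mul_diagonal_mul_transpose_mul]
    simp only [hcol, Finset.sum_sub_distrib, mul_comm (v _)]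
    ring
  rw [hJ_near.fderiv_eq, fderiv_const_add,
    fderiv_sum_mul_sub_log_eq_zero_iff _ _ fun j => (hu j).ne']

/-- For a tree topology, the objective J(u) = −log det(G diag(u⁺) Gᵀ) + tr(Ξ diag(u) Ξᵀ K)
has its unique stationary point on positive weight vectors at u_j = 1/(ξ_jᵀ K ξ_j). -/
theorem tree_objective_unique_stationary_point (n : ℕ) (hn : 0 < n)
    (ξ : Fin (n - 1) → Fin n → ℝ)
    (Ξ : Matrix (Fin n) (Fin (n - 1)) ℝ) (hΞ : ∀ i j, Ξ i j = ξ j i)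
    (G : Matrix (Fin n) (Fin n) ℝ)
    (hG : ∀ i j, G i j = if h : (j : ℕ) < n - 1 then ξ ⟨j, h⟩ i else 1)
    (hGinv : IsUnit G.det)
    (K : Matrix (Fin n) (Fin n) ℝ) (hK : K.IsSymm)
    (hKpos : ∀ j, 0 < ξ j ⬝ᵥ (K *ᵥ ξ j))
    (uplus : (Fin (n - 1) → ℝ) → Fin n → ℝ)
    (huplus : ∀ u j, uplus u j = if h : (j : ℕ) < n - 1 then u ⟨j, h⟩ else (n : ℝ)⁻¹)
    (J : (Fin (n - 1) → ℝ) → ℝ)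
    (hJ : ∀ u, J u = -Real.log (G * Matrix.diagonal (uplus u) * Gᵀ).det
        + Matrix.trace (Ξ * Matrix.diagonal u * Ξᵀ * K)) :
    ∀ u : Fin (n - 1) → ℝ, (∀ j, 0 < u j) →
      (fderiv ℝ J u = 0 ↔ u = fun j => (ξ j ⬝ᵥ (K *ᵥ ξ j))⁻¹) :=
  tree_objective_unique_stationary_point_general n hn ξ Ξ hΞ G hGinv K uplus huplus J hJ
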